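/- arXiv:2406.05532 — 2 statements merged into one kernel-verified Lean document; each statement's English description precedes it below -/
import Mathlib

section
/- Lower bound of Theorem 1: consider the SSM output map y_k = Σ_{j=1}^{k} K_j u_{k-j+1} where K_j = C̄_j (∏_{i=1}^{j-1} Ā_i) B̄_j are scalars (kernel coefficients), written as y = H u for the lower triangular Toeplitz matrix H with first column (K₁,…,K_L). Let ε = u' − u be a random perturbation with E[εᵢ] = μ for all i. Then there exists a constant c₁ > 0 (the smallest eigenvalue of EᵀE, E the all-ones lower triangular matrix) such that E[‖y' − y‖²] ≥ μ² c₁ Σ_{j=1}^{L} K_j². -/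
open Matrix MeasureTheory

/-- The L×L all-ones lower triangular matrix. -/
def Emat (L : ℕ) : Matrix (Fin L) (Fin L) ℝ :=
  Matrix.of fun i j => if j ≤ i then (1 : ℝ) else 0

/-- The lower triangular Toeplitz matrix with first column `K`. -/
def toeplitzLT {L : ℕ} (K : Fin L → ℝ) : Matrix (Fin L) (Fin L) ℝ :=
  Matrix.of fun i j =>
    if h : (j : ℕ) ≤ (i : ℕ) then K ⟨(i : ℕ) - (j : ℕ), by omega⟩ else 0

/-!
The mean of `Hε` is `H (μ 𝟙) = μ H 𝟙`, and the row sums of a lower triangular Toeplitz matrix are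
the partial sums of its first column, so `H 𝟙 = E K`. Since the second moment dominates the squared
mean coordinatewise, `E‖Hε‖² ≥ μ² ‖E K‖² = μ² Kᵀ(EᵀE)K ≥ μ² c₁ ‖K‖²` by the Rayleigh bound for the
smallest eigenvalue `c₁` of `EᵀE`, which is positive because `E` is unitriangular, hence invertible.
-/

open scoped MatrixOrder in
theorem Matrix.IsHermitian.mul_dotProduct_self_le {n : Type*} [Fintype n] [DecidableEq n]
    {M : Matrix n n ℝ} (hM : M.IsHermitian) {c : ℝ} (hc : ∀ i, c ≤ hM.eigenvalues i)
    (x : n → ℝ) : c * (x ⬝ᵥ x) ≤ x ⬝ᵥ M *ᵥ x := by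
  have hcM : algebraMap ℝ (Matrix n n ℝ) c ≤ M := by
    rw [algebraMap_le_iff_le_spectrum hM, hM.spectrum_real_eq_range_eigenvalues]
    rintro _ ⟨i, rfl⟩
    exact hc i
  have hquad := (Matrix.le_iff.mp hcM).dotProduct_mulVec_nonneg x
  rw [star_trivial, sub_mulVec, dotProduct_sub, Algebra.algebraMap_eq_smul_one, smul_mulVec,
    one_mulVec, dotProduct_smul, smul_eq_mul] at hquad
  linarith

theorem det_Emat (L : ℕ) : (Emat L).det = 1 := by
  rw [det_of_isLowerTriangular _ fun i j hij => by
    simp [Emat, not_le.mpr (OrderDual.toDual_lt_toDual.mp hij)]]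
  simp [Emat]

theorem posDef_transpose_Emat_mul_self (L : ℕ) : ((Emat L)ᵀ * Emat L).PosDef := by
  have hinj : Function.Injective (Emat L).mulVec :=
    mulVec_injective_iff_isUnit.mpr (by simp [isUnit_iff_isUnit_det, det_Emat])
  simpa using PosDef.conjTranspose_mul_self (Emat L) hinj

theorem toeplitzLT_mulVec_one {L : ℕ} (K : Fin L → ℝ) : toeplitzLT K *ᵥ 1 = Emat L *ᵥ K := by
  ext i
  let reflect (j : Fin L) : Fin L := if j ≤ i then ⟨i - j, by omega⟩ else j
  have reflect_involutive : reflect.Involutive := by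
    intro j
    by_cases hj : j ≤ i
    · have : (⟨i - j, by omega⟩ : Fin L) ≤ i := Fin.mk_le_of_le_val (by omega)
      simp only [reflect, hj, this, ↓reduceIte]
      ext; simp only; omega
    · simp [reflect, hj]
  simp only [mulVec, dotProduct, Pi.one_apply, mul_one]
  rw [← Equiv.sum_comp reflect_involutive.toPerm]
  refine Finset.sum_congr rfl fun j _ => ?_
  by_cases hj : j ≤ i
  · simp only [Function.Involutive.coe_toPerm, reflect, hj, ↓reduceIte, toeplitzLT, Emat,
      of_apply, one_mul]
    rw [dif_pos (by simp)]
    exact congrArg K (Fin.ext (by simp only; omega))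
  · simp [toeplitzLT, Emat, reflect, hj]

section Moments

variable {Ω : Type*} [MeasurableSpace Ω] {P : Measure Ω}

theorem integrable_mulVec_apply {m n : Type*} [Fintype n] (M : Matrix m n ℝ) {X : Ω → n → ℝ}
    (hX : ∀ j, Integrable (fun ω => X ω j) P) (i : m) :
    Integrable (fun ω => (M *ᵥ X ω) i) P :=
  integrable_finsetSum _ fun j _ => (hX j).const_mul _

theorem integral_mulVec_apply {m n : Type*} [Fintype n] (M : Matrix m n ℝ) {X : Ω → n → ℝ}
    (hX : ∀ j, Integrable (fun ω => X ω j) P) (i : m) :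
    ∫ ω, (M *ᵥ X ω) i ∂P = (M *ᵥ fun j => ∫ ω, X ω j ∂P) i := by
  simp only [mulVec, dotProduct]
  rw [integral_finsetSum _ fun j _ => (hX j).const_mul _]
  simp_rw [integral_const_mul]

variable [IsProbabilityMeasure P]

theorem sq_integral_le_integral_sq {X : Ω → ℝ} (hX : AEStronglyMeasurable X P)
    (hX2 : Integrable (fun ω => X ω ^ 2) P) : (∫ ω, X ω ∂P) ^ 2 ≤ ∫ ω, X ω ^ 2 ∂P := by
  have hvar := ProbabilityTheory.variance_eq_sub ((memLp_two_iff_integrable_sq hX).mpr hX2)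
  have hvar_nonneg := ProbabilityTheory.variance_nonneg X P
  simp only [Pi.pow_apply] at hvar
  linarith

theorem sum_sq_integral_le_integral_sum_sq {ι : Type*} [Fintype ι] {X : Ω → ι → ℝ}
    (hX : ∀ i, AEStronglyMeasurable (fun ω => X ω i) P)
    (hX2 : Integrable (fun ω => ∑ i, X ω i ^ 2) P) :
    ∑ i, (∫ ω, X ω i ∂P) ^ 2 ≤ ∫ ω, ∑ i, X ω i ^ 2 ∂P := by
  have hsq : ∀ i, Integrable (fun ω => X ω i ^ 2) P := fun i =>
    hX2.mono' ((hX i).pow 2) (.of_forall fun ω => by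
      rw [Real.norm_of_nonneg (sq_nonneg _)]
      exact Finset.single_le_sum (fun j _ => sq_nonneg (X ω j)) (Finset.mem_univ i))
  rw [integral_finsetSum _ fun i _ => hsq i]
  exact Finset.sum_le_sum fun i _ => sq_integral_le_integral_sq (hX i) (hsq i)

end Moments

theorem ssm_output_error_lower_bound_general
    {L : ℕ} {Ω : Type*} [MeasureSpace Ω] [IsProbabilityMeasure (volume : Measure Ω)]
    (K : Fin L → ℝ)
    (ε : Ω → Fin L → ℝ) (μ : ℝ) (hmean : ∀ i, ∫ ω, ε ω i = μ)
    (hherm : ((Emat L)ᵀ * Emat L).IsHermitian) (c₁ : ℝ)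
    (hc₁ : IsLeast (Set.range hherm.eigenvalues) c₁)
    (hint2 : Integrable (fun ω => ∑ i, ((toeplitzLT K).mulVec (ε ω) i) ^ 2)) :
    0 < c₁ ∧
      μ ^ 2 * c₁ * ∑ j, (K j) ^ 2 ≤ ∫ ω, ∑ i, ((toeplitzLT K).mulVec (ε ω) i) ^ 2 := by
  refine ⟨?_, ?_⟩
  · obtain ⟨i, rfl⟩ := hc₁.1
    exact (posDef_transpose_Emat_mul_self L).eigenvalues_pos i
  rcases eq_or_ne μ 0 with rfl | hμ
  · simpa using integral_nonneg fun ω => Finset.sum_nonneg fun i _ => sq_nonneg _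
  have hε : ∀ j, Integrable (fun ω => ε ω j) := fun j =>
    .of_integral_ne_zero (by rw [hmean]; exact hμ)
  have hmean_output : ∀ i, ∫ ω, (toeplitzLT K *ᵥ ε ω) i = μ * (Emat L *ᵥ K) i := fun i => by
    rw [integral_mulVec_apply _ hε, show (fun j => ∫ ω, ε ω j) = μ • 1 by ext; simp [hmean],
      mulVec_smul, toeplitzLT_mulVec_one, Pi.smul_apply, smul_eq_mul]
  have hrayleigh := hherm.mul_dotProduct_self_le (fun i => hc₁.2 ⟨i, rfl⟩) K
  rw [← mulVec_mulVec, dotProduct_mulVec, vecMul_transpose] at hrayleigh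
  calc μ ^ 2 * c₁ * ∑ j, K j ^ 2 ≤ μ ^ 2 * ((Emat L *ᵥ K) ⬝ᵥ (Emat L *ᵥ K)) := by
        rw [mul_assoc]
        gcongr
        simpa [dotProduct, sq] using hrayleigh
    _ = ∑ i, (∫ ω, (toeplitzLT K *ᵥ ε ω) i) ^ 2 := by
        simp only [hmean_output, dotProduct, Finset.mul_sum]
        exact Finset.sum_congr rfl fun i _ => by ring
    _ ≤ _ := sum_sq_integral_le_integral_sum_sq
        (fun i => (integrable_mulVec_apply _ hε i).aestronglyMeasurable) hint2

/-- Lower bound of Theorem 1: for the SSM output map `y = Hu` with kernel coefficients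
`K_j = C̄_j (∏_{i<j-1} Ā_i) B̄_j` and a random perturbation `ε` with mean `μ` in every
component, the smallest eigenvalue `c₁` of `EᵀE` is positive and
`E[‖y' − y‖²] ≥ μ² c₁ Σ_j K_j²`. -/
theorem ssm_output_error_lower_bound
    {h L : ℕ} {Ω : Type*} [MeasureSpace Ω] [IsProbabilityMeasure (volume : Measure Ω)]
    (A : ℕ → Matrix (Fin h) (Fin h) ℝ) (B : ℕ → (Fin h → ℝ)) (C : ℕ → (Fin h → ℝ))
    (K : Fin L → ℝ)
    (hK : ∀ j : Fin L, K j = C (j : ℕ) ⬝ᵥ (((List.range (j : ℕ)).map A).prod).mulVec (B (j : ℕ)))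
    (ε : Ω → Fin L → ℝ) (μ : ℝ) (hmean : ∀ i, ∫ ω, ε ω i = μ)
    (hherm : ((Emat L)ᵀ * Emat L).IsHermitian) (c₁ : ℝ)
    (hc₁ : IsLeast (Set.range hherm.eigenvalues) c₁)
    (hint : ∀ i, Integrable (fun ω => (toeplitzLT K).mulVec (ε ω) i))
    (hint2 : Integrable (fun ω => ∑ i, ((toeplitzLT K).mulVec (ε ω) i) ^ 2)) :
    0 < c₁ ∧
      μ ^ 2 * c₁ * ∑ j, (K j) ^ 2 ≤ ∫ ω, ∑ i, ((toeplitzLT K).mulVec (ε ω) i) ^ 2 :=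
  ssm_output_error_lower_bound_general K ε μ hmean hherm c₁ hc₁ hint2
end

section
/- Upper bound of Theorem 1: with the same SSM setup y = Hu for the lower triangular Toeplitz matrix H with first column (K₁,…,K_L), if the perturbation ε satisfies E[εᵢ²] ≤ M for all i, then E[‖y' − y‖²] ≤ c₂ M Σ_{j=1}^{L} K_j², where c₂ is the largest eigenvalue of EᵀE. -/
open Matrix MeasureTheory

/-!
Proof. Cauchy–Schwarz with weights `|H i j|` bounds `(Hε)_i²` by `s_i ∑_j |H i j| ε_j²`, where
`s_i = ∑_j |H i j|`; taking expectations gives `E‖Hε‖² ≤ M ∑_i s_i²`. For the Toeplitz matrix the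
row sums are the partial sums of `|K|`, i.e. `s = E |K|`, and `‖E |K|‖² ≤ c₂ ‖K‖²` is the
Rayleigh bound for `EᵀE`.
-/

section Rayleigh

open scoped MatrixOrder

variable {m n : Type*} [Fintype m] [Fintype n] [DecidableEq n]

theorem Matrix.IsHermitian.dotProduct_mulVec_le {A : Matrix n n ℝ} (hA : A.IsHermitian) {c : ℝ}
    (hc : ∀ i, hA.eigenvalues i ≤ c) (x : n → ℝ) : x ⬝ᵥ A *ᵥ x ≤ c * (x ⬝ᵥ x) := by
  have hle : A ≤ algebraMap ℝ (Matrix n n ℝ) c := by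
    refine le_algebraMap_of_spectrum_le ?_ hA
    rw [hA.spectrum_real_eq_range_eigenvalues]
    rintro _ ⟨i, rfl⟩
    exact hc i
  simpa [Algebra.algebraMap_eq_smul_one, sub_mulVec, dotProduct_sub, smul_mulVec,
    dotProduct_smul] using (Matrix.le_iff.mp hle).dotProduct_mulVec_nonneg x

theorem Matrix.mulVec_dotProduct_mulVec_self_le {A : Matrix m n ℝ} (hA : (Aᵀ * A).IsHermitian)
    {c : ℝ} (hc : ∀ i, hA.eigenvalues i ≤ c) (x : n → ℝ) :
    (A *ᵥ x) ⬝ᵥ (A *ᵥ x) ≤ c * (x ⬝ᵥ x) := by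
  have hquad : x ⬝ᵥ (Aᵀ * A) *ᵥ x = (A *ᵥ x) ⬝ᵥ (A *ᵥ x) := by
    rw [← mulVec_mulVec, dotProduct_mulVec, vecMul_transpose]
  exact hquad ▸ hA.dotProduct_mulVec_le hc x

end Rayleigh

section SecondMoment

variable {m n : Type*} [Fintype n]

theorem sq_sum_mul_le_sum_abs_mul_sum_abs_mul_sq (a b : n → ℝ) :
    (∑ j, a j * b j) ^ 2 ≤ (∑ j, |a j|) * ∑ j, |a j| * b j ^ 2 :=
  Finset.sum_sq_le_sum_mul_sum_of_sq_le_mul _ (fun _ _ => abs_nonneg _)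
    (fun _ _ => mul_nonneg (abs_nonneg _) (sq_nonneg _))
    (fun j _ => le_of_eq (by rw [mul_pow, ← sq_abs (a j)]; ring))

theorem sq_mulVec_apply_le (T : Matrix m n ℝ) (x : n → ℝ) (i : m) :
    (T *ᵥ x) i ^ 2 ≤ ∑ j, (∑ k, |T i k|) * |T i j| * x j ^ 2 := by
  simp only [mul_assoc, ← Finset.mul_sum]
  exact sq_sum_mul_le_sum_abs_mul_sum_abs_mul_sq (T i) x

theorem integral_sum_sq_mulVec_le [Fintype m] {Ω : Type*} [MeasurableSpace Ω] {μ : Measure Ω}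
    (T : Matrix m n ℝ) {ε : Ω → n → ℝ} {M : ℝ}
    (hint : ∀ j, Integrable (fun ω => ε ω j ^ 2) μ) (hsq : ∀ j, ∫ ω, ε ω j ^ 2 ∂μ ≤ M) :
    ∫ ω, ∑ i, (T *ᵥ ε ω) i ^ 2 ∂μ ≤ M * ∑ i, (∑ j, |T i j|) ^ 2 := by
  set s : m → ℝ := fun i => ∑ j, |T i j|
  have hs : ∀ i, 0 ≤ s i := fun i => Finset.sum_nonneg fun j _ => abs_nonneg (T i j)
  have hint' : ∀ i j, Integrable (fun ω => s i * |T i j| * ε ω j ^ 2) μ :=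
    fun i j => (hint j).const_mul _
  calc ∫ ω, ∑ i, (T *ᵥ ε ω) i ^ 2 ∂μ
      ≤ ∫ ω, ∑ i, ∑ j, s i * |T i j| * ε ω j ^ 2 ∂μ :=
        integral_mono_of_nonneg (.of_forall fun ω => by positivity)
          (integrable_finsetSum _ fun i _ => integrable_finsetSum _ fun j _ => hint' i j)
          (.of_forall fun ω => Finset.sum_le_sum fun i _ => sq_mulVec_apply_le T (ε ω) i)
    _ = ∑ i, ∑ j, s i * |T i j| * ∫ ω, ε ω j ^ 2 ∂μ := by
        rw [integral_finsetSum _ fun i _ => integrable_finsetSum _ fun j _ => hint' i j]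
        refine Finset.sum_congr rfl fun i _ => ?_
        rw [integral_finsetSum _ fun j _ => hint' i j]
        exact Finset.sum_congr rfl fun j _ => integral_const_mul _ _
    _ ≤ ∑ i, ∑ j, s i * |T i j| * M :=
        Finset.sum_le_sum fun i _ => Finset.sum_le_sum fun j _ =>
          mul_le_mul_of_nonneg_left (hsq j) (mul_nonneg (hs i) (abs_nonneg _))
    _ = M * ∑ i, s i ^ 2 := by
        rw [mul_comm M]
        simp only [← Finset.sum_mul, ← Finset.mul_sum, sq, s]

end SecondMoment

section Toeplitz

variable {L : ℕ}

theorem Fin.sum_ite_le_eq_sum_range {M : Type*} [AddCommMonoid M] (i : Fin L) (f : ℕ → M) :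
    ∑ j : Fin L, (if j ≤ i then f j else 0) = ∑ j ∈ Finset.range (i + 1), f j := by
  simp only [Fin.le_iff_val_le_val]
  rw [Fin.sum_univ_eq_sum_range (fun j => if j ≤ (i : ℕ) then f j else 0), ← Finset.sum_filter]
  congr 1
  ext j
  simp only [Finset.mem_filter, Finset.mem_range]
  omega

theorem sum_abs_toeplitzLT_apply (K : Fin L → ℝ) (i : Fin L) :
    ∑ j, |toeplitzLT K i j| = (Emat L *ᵥ fun j => |K j|) i := by
  set g : ℕ → ℝ := fun n => if h : n < L then |K ⟨n, h⟩| else 0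
  have hT : ∀ j, |toeplitzLT K i j| = if j ≤ i then g (i - j) else 0 := fun j => by
    by_cases hji : j ≤ i
    · simp [toeplitzLT, g, hji, show (i : ℕ) - j < L by omega]
    · simp [toeplitzLT, hji]
  have hE : ∀ j, Emat L i j * |K j| = if j ≤ i then g j else 0 := fun j => by
    simp [Emat, g]
  simp only [hT, mulVec, dotProduct, hE]
  rw [Fin.sum_ite_le_eq_sum_range i (fun n => g (i - n)), Fin.sum_ite_le_eq_sum_range i g]
  simpa using Finset.sum_range_reflect g (i + 1)

end Toeplitz

theorem ssm_output_error_upper_bound_general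
    {L : ℕ} {Ω : Type*} [MeasureSpace Ω]
    (K : Fin L → ℝ)
    (ε : Ω → Fin L → ℝ) (M : ℝ) (hsq : ∀ i, ∫ ω, (ε ω i) ^ 2 ≤ M)
    (hherm : ((Emat L)ᵀ * Emat L).IsHermitian) (c₂ : ℝ)
    (hc₂ : IsGreatest (Set.range hherm.eigenvalues) c₂)
    (hint : ∀ i, Integrable (fun ω => ((ε ω i) ^ 2))) :
    ∫ ω, ∑ i, ((toeplitzLT K).mulVec (ε ω) i) ^ 2 ≤ c₂ * M * ∑ j, (K j) ^ 2 := by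
  rcases Nat.eq_zero_or_pos L with rfl | hL
  · simp
  have hM : 0 ≤ M := (integral_nonneg fun ω => sq_nonneg (ε ω ⟨0, hL⟩)).trans (hsq ⟨0, hL⟩)
  set v : Fin L → ℝ := fun j => |K j|
  calc ∫ ω, ∑ i, (toeplitzLT K *ᵥ ε ω) i ^ 2
      ≤ M * ∑ i, (∑ j, |toeplitzLT K i j|) ^ 2 := integral_sum_sq_mulVec_le _ hint hsq
    _ = M * ((Emat L *ᵥ v) ⬝ᵥ (Emat L *ᵥ v)) := by
        simp only [sum_abs_toeplitzLT_apply, dotProduct, sq, v]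
    _ ≤ M * (c₂ * (v ⬝ᵥ v)) := mul_le_mul_of_nonneg_left
        (mulVec_dotProduct_mulVec_self_le hherm (fun i => hc₂.2 ⟨i, rfl⟩) v) hM
    _ = c₂ * M * ∑ j, K j ^ 2 := by simp [v, dotProduct, ← sq, mul_assoc, mul_left_comm]

/-- Upper bound of Theorem 1: for the SSM output map `y = Hu` with kernel coefficients
`K_j = C̄_j (∏ Ā_i) B̄_j`, if the perturbation satisfies `E[εᵢ²] ≤ M` for all `i`, then
`E[‖y' − y‖²] ≤ c₂ M Σ_j K_j²`, where `c₂` is the largest eigenvalue of `EᵀE`. -/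
theorem ssm_output_error_upper_bound
    {h L : ℕ} {Ω : Type*} [MeasureSpace Ω] [IsProbabilityMeasure (volume : Measure Ω)]
    (A : ℕ → Matrix (Fin h) (Fin h) ℝ) (B : ℕ → (Fin h → ℝ)) (C : ℕ → (Fin h → ℝ))
    (K : Fin L → ℝ)
    (hK : ∀ j : Fin L, K j = C (j : ℕ) ⬝ᵥ (((List.range (j : ℕ)).map A).prod).mulVec (B (j : ℕ)))
    (ε : Ω → Fin L → ℝ) (M : ℝ) (hsq : ∀ i, ∫ ω, (ε ω i) ^ 2 ≤ M)
    (hherm : ((Emat L)ᵀ * Emat L).IsHermitian) (c₂ : ℝ)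
    (hc₂ : IsGreatest (Set.range hherm.eigenvalues) c₂)
    (hint : ∀ i, Integrable (fun ω => ((ε ω i) ^ 2)))
    (hint2 : Integrable (fun ω => ∑ i, ((toeplitzLT K).mulVec (ε ω) i) ^ 2)) :
    ∫ ω, ∑ i, ((toeplitzLT K).mulVec (ε ω) i) ^ 2 ≤ c₂ * M * ∑ j, (K j) ^ 2 :=
  ssm_output_error_upper_bound_general K ε M hsq hherm c₂ hc₂ hint
end
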